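/- arXiv:2205.15673 — 3 statements merged into one kernel-verified Lean document; each statement's English description precedes it below -/
import Mathlib

section
/- Let F(x) = (I − aP)x − b with max_i a·λ_i(P+Pᵀ) < 1, and define T : ℝ^{2n} → ℝ^{2n} by T(x, u) = (F(x) − u, x − x_s) for fixed x_s ∈ ℝⁿ. Then T is monotone: ((x,u) − (y,v))ᵀ(T(x,u) − T(y,v)) ≥ 0 for all (x,u), (y,v). -/
/-!
The eigenvalue condition makes the symmetric part `2 - a (P + Pᵀ)` of `2 (I - aP)` positive
semidefinite, so `F` is monotone. In `T` the variable `u` enters the first component as `-u` and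
`x` enters the second as `+x`; this skew-symmetric coupling contributes
`-⟪x - y, u - v⟫ + ⟪u - v, x - y⟫ = 0`, so `T` inherits monotonicity from `F`.
-/

open Matrix RealInnerProductSpace

noncomputable def mulVecE {n : ℕ} (M : Matrix (Fin n) (Fin n) ℝ) (x : EuclideanSpace ℝ (Fin n)) :
    EuclideanSpace ℝ (Fin n) :=
  (WithLp.equiv 2 (Fin n → ℝ)).symm (M.mulVec ((WithLp.equiv 2 (Fin n → ℝ)) x))

namespace Matrix

open scoped MatrixOrder

variable {ι : Type*} [Fintype ι] [DecidableEq ι]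

theorem IsHermitian.posSemidef_smul_one_sub_smul {A : Matrix ι ι ℝ} (hA : A.IsHermitian)
    {a c : ℝ} (h : ∀ i, a * hA.eigenvalues i ≤ c) : (c • 1 - a • A).PosSemidef := by
  have hcfc : c • 1 - a • A = cfc (fun x => c - a * x) A := by
    rw [cfc_sub .., cfc_const_mul .., cfc_id' .., cfc_const ..]
    simp only [Algebra.algebraMap_eq_smul_one]
  rw [← nonneg_iff_posSemidef, hcfc]
  refine cfc_nonneg fun x hx => ?_
  rw [hA.spectrum_real_eq_range_eigenvalues] at hx
  obtain ⟨i, rfl⟩ := hx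
  linarith [h i]

theorem dotProduct_one_sub_smul_mulVec_nonneg {P : Matrix ι ι ℝ} (hA : (P + Pᵀ).IsHermitian)
    {a : ℝ} (h : ∀ i, a * hA.eigenvalues i ≤ 2) (z : ι → ℝ) :
    0 ≤ z ⬝ᵥ ((1 - a • P) *ᵥ z) := by
  have hsym : z ⬝ᵥ (((2 : ℝ) • 1 - a • (P + Pᵀ)) *ᵥ z) = 2 * (z ⬝ᵥ ((1 - a • P) *ᵥ z)) := by
    simp only [sub_mulVec, add_mulVec, smul_mulVec, one_mulVec, dotProduct_sub, dotProduct_add,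
      dotProduct_smul, smul_eq_mul, dotProduct_transpose_mulVec]
    ring
  have hpsd := (hA.posSemidef_smul_one_sub_smul h).dotProduct_mulVec_nonneg z
  rw [star_trivial, hsym] at hpsd
  linarith

end Matrix

section MonotoneOperator

variable {E : Type*} [NormedAddCommGroup E] [InnerProductSpace ℝ E]

def IsMonotoneOperator (F : E → E) : Prop :=
  ∀ x y, 0 ≤ ⟪x - y, F x - F y⟫

theorem IsMonotoneOperator.inner_skew_extension_nonneg {F : E → E} (hF : IsMonotoneOperator F)
    (xs x u y v : E) :
    0 ≤ ⟪x - y, (F x - u) - (F y - v)⟫ + ⟪u - v, (x - xs) - (y - xs)⟫ := by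
  rw [sub_sub_sub_comm, inner_sub_right, sub_sub_sub_cancel_right, real_inner_comm (u - v)]
  linarith [hF x y]

end MonotoneOperator

theorem isMonotoneOperator_mulVecE_sub {n : ℕ} {M : Matrix (Fin n) (Fin n) ℝ}
    (hM : ∀ z, 0 ≤ z ⬝ᵥ (M *ᵥ z)) (b : EuclideanSpace ℝ (Fin n)) :
    IsMonotoneOperator fun x => mulVecE M x - b := by
  intro x y
  rw [sub_sub_sub_cancel_right, EuclideanSpace.inner_eq_star_dotProduct, dotProduct_comm]
  simpa only [mulVecE, WithLp.equiv_apply, WithLp.equiv_symm_apply, WithLp.ofLp_sub, star_trivial,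
    mulVec_sub] using hM (x - y).ofLp

/-- With `F x = (I - aP) x - b` strongly monotone (eigenvalue condition), the extended
map `T (x, u) = (F x - u, x - x_s)` of the dynamic intervention is monotone. -/
theorem stmt_10 {n : ℕ} (a : ℝ) (P : Matrix (Fin n) (Fin n) ℝ)
    (b : EuclideanSpace ℝ (Fin n))
    (hA : (P + Pᵀ).IsHermitian)
    (heig : ∀ i, a * hA.eigenvalues i < 1)
    (F : EuclideanSpace ℝ (Fin n) → EuclideanSpace ℝ (Fin n))
    (hF : ∀ x, F x = mulVecE ((1 : Matrix (Fin n) (Fin n) ℝ) - a • P) x - b)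
    (xs : EuclideanSpace ℝ (Fin n))
    (T : EuclideanSpace ℝ (Fin n) × EuclideanSpace ℝ (Fin n) →
         EuclideanSpace ℝ (Fin n) × EuclideanSpace ℝ (Fin n))
    (hT : ∀ x u, T (x, u) = (F x - u, x - xs)) :
    ∀ x u y v : EuclideanSpace ℝ (Fin n),
      ⟪x - y, (T (x, u)).1 - (T (y, v)).1⟫ + ⟪u - v, (T (x, u)).2 - (T (y, v)).2⟫ ≥ 0 := by
  intro x u y v
  have hFmono : IsMonotoneOperator F := by
    rw [funext hF]
    exact isMonotoneOperator_mulVecE_sub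
      (dotProduct_one_sub_smul_mulVec_nonneg hA fun i => (heig i).le.trans one_le_two) b
  simpa only [hT] using hFmono.inner_skew_extension_nonneg xs x u y v
end

section
/- Let e : [0,∞) → ℝⁿ and Ψ : [0,∞) → ℝ^{n×n} be continuously differentiable and satisfy ė = −e − Ψx − e(xᵀx) and Ψ̇ = exᵀ for some continuous x : [0,∞) → ℝⁿ. Then e and Ψ are bounded, and ∫₀^∞ ‖e(τ)‖² dτ < ∞ and ∫₀^∞ ‖e(τ)‖²‖x(τ)‖² dτ < ∞. -/
/-!
The Lyapunov function `V = ½(‖e‖² + ‖Ψ‖_F²)` satisfies `V̇ = -‖e‖² - ‖e‖²‖x‖² ≤ 0`, because the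
cross terms `∓⟪e, Ψ x⟫` coming from `ė` and `Ψ̇ = e xᵀ` cancel. Hence `V` is nonincreasing, which
bounds `e` and `Ψ` by `√(2 V(0))`; and since `V ≥ 0`, the nonnegative dissipation rate
`‖e‖² + ‖e‖²‖x‖² = -V̇` is integrable on `[0, ∞)`.
-/

open Matrix RealInnerProductSpace MeasureTheory

open Set Filter Topology

theorem antitoneOn_Ici_of_hasDerivAt_nonpos {V V' : ℝ → ℝ} {a : ℝ}
    (hV : ∀ t ∈ Ici a, HasDerivAt V (V' t) t) (hV' : ∀ t ∈ Ici a, V' t ≤ 0) :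
    AntitoneOn V (Ici a) := by
  refine antitoneOn_of_deriv_nonpos (convex_Ici a)
    (fun t ht => (hV t ht).continuousAt.continuousWithinAt) ?_ ?_ <;> rw [interior_Ici]
  · exact fun t ht => (hV t (mem_Ici_of_Ioi ht)).differentiableAt.differentiableWithinAt
  · exact fun t ht => (hV t (mem_Ici_of_Ioi ht)).deriv ▸ hV' t (mem_Ici_of_Ioi ht)

theorem AntitoneOn.exists_tendsto_atTop_of_Ici {V : ℝ → ℝ} {a : ℝ} (hV : AntitoneOn V (Ici a))
    (hbdd : BddBelow (V '' Ici a)) : ∃ l, Tendsto V atTop (𝓝 l) := by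
  have hanti : Antitone fun t => V (max a t) := fun s t hst =>
    hV (le_max_left a s) (le_max_left a t) (max_le_max_left a hst)
  have hrange : BddBelow (range fun t => V (max a t)) :=
    hbdd.mono (range_subset_iff.2 fun t => mem_image_of_mem V (le_max_left a t))
  refine ⟨_, (tendsto_atTop_ciInf hanti hrange).congr' ?_⟩
  filter_upwards [eventually_ge_atTop a] with t ht
  rw [max_eq_right ht]

theorem integrableOn_Ici_deriv_of_nonpos_of_bddBelow {V V' : ℝ → ℝ} {a : ℝ}
    (hV : ∀ t ∈ Ici a, HasDerivAt V (V' t) t) (hV' : ∀ t ∈ Ici a, V' t ≤ 0)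
    (hbdd : BddBelow (V '' Ici a)) : IntegrableOn V' (Ici a) := by
  obtain ⟨l, hl⟩ := (antitoneOn_Ici_of_hasDerivAt_nonpos hV hV').exists_tendsto_atTop_of_Ici hbdd
  rw [integrableOn_Ici_iff_integrableOn_Ioi]
  exact integrableOn_Ioi_deriv_of_nonpos' hV (fun t ht => hV' t (mem_Ici_of_Ioi ht)) hl

section AdaptiveErrorDynamics

variable {n : ℕ}

theorem inner_mulVecE (M : Matrix (Fin n) (Fin n) ℝ) (e x : EuclideanSpace ℝ (Fin n)) :
    ⟪e, mulVecE M x⟫ = ∑ i, ∑ j, M i j * (e i * x j) := by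
  simp only [PiLp.inner_apply, RCLike.inner_apply, conj_trivial]
  refine Finset.sum_congr rfl fun i _ => ?_
  show (∑ j, M i j * x j) * e i = _
  rw [Finset.sum_mul]
  exact Finset.sum_congr rfl fun j _ => by ring

noncomputable def lyapunov (e : ℝ → EuclideanSpace ℝ (Fin n)) (Ψ : ℝ → Matrix (Fin n) (Fin n) ℝ)
    (t : ℝ) : ℝ :=
  (‖e t‖ ^ 2 + ∑ i, ∑ j, Ψ t i j ^ 2) / 2

theorem lyapunov_nonneg (e : ℝ → EuclideanSpace ℝ (Fin n)) (Ψ : ℝ → Matrix (Fin n) (Fin n) ℝ)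
    (t : ℝ) : 0 ≤ lyapunov e Ψ t := by
  unfold lyapunov; positivity

theorem norm_le_and_abs_entry_le_of_lyapunov_le {e : ℝ → EuclideanSpace ℝ (Fin n)}
    {Ψ : ℝ → Matrix (Fin n) (Fin n) ℝ} {t c : ℝ} (h : lyapunov e Ψ t ≤ c) :
    ‖e t‖ ≤ √(2 * c) ∧ ∀ i j, |Ψ t i j| ≤ √(2 * c) := by
  unfold lyapunov at h
  have hΨ : 0 ≤ ∑ i, ∑ j, Ψ t i j ^ 2 := by positivity
  refine ⟨(le_abs_self _).trans (Real.abs_le_sqrt (by linarith)), fun i j => Real.abs_le_sqrt ?_⟩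
  have hentry : Ψ t i j ^ 2 ≤ ∑ i, ∑ j, Ψ t i j ^ 2 :=
    calc Ψ t i j ^ 2 ≤ ∑ j, Ψ t i j ^ 2 :=
          Finset.single_le_sum (fun j _ => sq_nonneg (Ψ t i j)) (Finset.mem_univ j)
      _ ≤ ∑ i, ∑ j, Ψ t i j ^ 2 :=
          Finset.single_le_sum (f := fun i => ∑ j, Ψ t i j ^ 2) (fun i _ => by positivity)
            (Finset.mem_univ i)
  linarith [sq_nonneg ‖e t‖]

theorem hasDerivAt_lyapunov {x e : ℝ → EuclideanSpace ℝ (Fin n)}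
    {Ψ : ℝ → Matrix (Fin n) (Fin n) ℝ} {t : ℝ}
    (he : HasDerivAt e (-e t - mulVecE (Ψ t) (x t) - (⟪x t, x t⟫) • e t) t)
    (hΨ : ∀ i j, HasDerivAt (fun s => Ψ s i j) (e t i * x t j) t) :
    HasDerivAt (lyapunov e Ψ) (-(‖e t‖ ^ 2 + ‖e t‖ ^ 2 * ‖x t‖ ^ 2)) t := by
  have hF : HasDerivAt (fun s => ∑ i, ∑ j, Ψ s i j ^ 2)
      (∑ i, ∑ j, 2 * Ψ t i j * (e t i * x t j)) t :=
    HasDerivAt.fun_sum fun i _ => HasDerivAt.fun_sum fun j _ => by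
      simpa [mul_assoc] using (hΨ i j).fun_pow 2
  refine ((he.norm_sq.add hF).div_const 2).congr_deriv ?_
  simp only [inner_sub_right, inner_neg_right, real_inner_smul_right, inner_mulVecE,
    real_inner_self_eq_norm_sq, mul_assoc, ← Finset.mul_sum]
  ring

end AdaptiveErrorDynamics

theorem stmt_12_general {n : ℕ}
    (x e : ℝ → EuclideanSpace ℝ (Fin n))
    (Ψ : ℝ → Matrix (Fin n) (Fin n) ℝ)
    (he : ∀ t, 0 ≤ t →
      HasDerivAt e (-e t - mulVecE (Ψ t) (x t) - (⟪x t, x t⟫) • e t) t)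
    (hΨ : ∀ i j, ∀ t, 0 ≤ t →
      HasDerivAt (fun s => Ψ s i j) (e t i * x t j) t) :
    (∃ C : ℝ, ∀ t, 0 ≤ t → ‖e t‖ ≤ C ∧ ∀ i j, |Ψ t i j| ≤ C) ∧
    IntegrableOn (fun τ => ‖e τ‖ ^ 2) (Set.Ici (0 : ℝ)) ∧
    IntegrableOn (fun τ => ‖e τ‖ ^ 2 * ‖x τ‖ ^ 2) (Set.Ici (0 : ℝ)) := by
  have hV : ∀ t ∈ Ici (0 : ℝ),
      HasDerivAt (lyapunov e Ψ) (-(‖e t‖ ^ 2 + ‖e t‖ ^ 2 * ‖x t‖ ^ 2)) t :=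
    fun t ht => hasDerivAt_lyapunov (he t ht) fun i j => hΨ i j t ht
  have hV' : ∀ t ∈ Ici (0 : ℝ), -(‖e t‖ ^ 2 + ‖e t‖ ^ 2 * ‖x t‖ ^ 2) ≤ 0 :=
    fun t _ => neg_nonpos.2 (by positivity)
  have hdecay := antitoneOn_Ici_of_hasDerivAt_nonpos hV hV'
  have hdiss : IntegrableOn (fun t => ‖e t‖ ^ 2 + ‖e t‖ ^ 2 * ‖x t‖ ^ 2) (Ici 0) := by
    simpa only [Pi.neg_def, neg_neg] using (integrableOn_Ici_deriv_of_nonpos_of_bddBelow hV hV'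
      ⟨0, forall_mem_image.2 fun t _ => lyapunov_nonneg e Ψ t⟩).neg
  have he2 : IntegrableOn (fun t => ‖e t‖ ^ 2) (Ici 0) := by
    refine hdiss.mono' ?_ (ae_of_all _ fun t => ?_)
    · exact (ContinuousOn.pow (ContinuousOn.norm fun t ht =>
        (he t ht).continuousAt.continuousWithinAt) 2).aestronglyMeasurable measurableSet_Ici
    · rw [Real.norm_of_nonneg (by positivity)]
      exact le_add_of_nonneg_right (by positivity)
  refine ⟨⟨_, fun t ht => norm_le_and_abs_entry_le_of_lyapunov_le (hdecay self_mem_Ici ht ht)⟩,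
    he2, ?_⟩
  exact (hdiss.sub he2).congr_fun (fun t _ => add_sub_cancel_left _ _) measurableSet_Ici

/-- Along the adaptive error dynamics `ė = -e - Ψ x - e (xᵀx)`, `Ψ̇ = e xᵀ` with
continuous `x`, the signals `e` and `Ψ` are bounded on `[0, ∞)`, and both `‖e‖²` and
`‖e‖²‖x‖²` are integrable on `[0, ∞)`. -/
theorem stmt_12 {n : ℕ}
    (x e : ℝ → EuclideanSpace ℝ (Fin n))
    (Ψ : ℝ → Matrix (Fin n) (Fin n) ℝ)
    (hx : Continuous x)
    (he : ∀ t, 0 ≤ t →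
      HasDerivAt e (-e t - mulVecE (Ψ t) (x t) - (⟪x t, x t⟫) • e t) t)
    (hΨ : ∀ i j, ∀ t, 0 ≤ t →
      HasDerivAt (fun s => Ψ s i j) (e t i * x t j) t) :
    (∃ C : ℝ, ∀ t, 0 ≤ t → ‖e t‖ ≤ C ∧ ∀ i j, |Ψ t i j| ≤ C) ∧
    IntegrableOn (fun τ => ‖e τ‖ ^ 2) (Set.Ici (0 : ℝ)) ∧
    IntegrableOn (fun τ => ‖e τ‖ ^ 2 * ‖x τ‖ ^ 2) (Set.Ici (0 : ℝ)) :=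
  stmt_12_general x e Ψ he hΨ
end

section
/- Modifying each player's payoff U_i(x) = −(1/2)x_i² + x_i(a·Σ_j P_{ij}x_j + b_i) by adding the term x_i·u_i with u_i = a·Σ_j P_{ji} x_j yields an exact potential game with potential Φ(x) = Σ_i [−(1/2)x_i² + x_i(a·Σ_j P_{ij}x_j + b_i)]: for all i, all x_i, y_i ∈ ℝ and all x_{-i}, one has Ũ_i(x_i, x_{-i}) − Ũ_i(y_i, x_{-i}) = Φ(x_i, x_{-i}) − Φ(y_i, x_{-i}), where Ũ_i(x) = U_i(x) + x_i·a·Σ_j P_{ji}x_j. -/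
open Finset

/-- Modifying each player's payoff `U_i` by the intervention `u_i = a Σ_j P_{ji} x_j`
yields an exact potential game whose potential is the social welfare
`Φ(x) = Σ_i [-(1/2) x_i² + x_i (a Σ_j P_{ij} x_j + b_i)]`. -/
theorem stmt_18 {n : ℕ} (a : ℝ) (P : Matrix (Fin n) (Fin n) ℝ)
    (hdiag : ∀ i, P i i = 0)
    (b : Fin n → ℝ)
    (U Utilde : Fin n → (Fin n → ℝ) → ℝ)
    (hU : ∀ i x, U i x = -(1 / 2) * (x i) ^ 2 + x i * (a * ∑ j, P i j * x j + b i))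
    (hUtilde : ∀ i x, Utilde i x = U i x + x i * (a * ∑ j, P j i * x j))
    (Φ : (Fin n → ℝ) → ℝ)
    (hΦ : ∀ x, Φ x = ∑ i, (-(1 / 2) * (x i) ^ 2 + x i * (a * ∑ j, P i j * x j + b i))) :
    ∀ (i : Fin n) (x : Fin n → ℝ) (yi : ℝ),
      Utilde i x - Utilde i (Function.update x i yi) =
        Φ x - Φ (Function.update x i yi) := by
  intro i x yi
  set y : Fin n → ℝ := Function.update x i yi with hy
  have hyi : y i = yi := Function.update_self i yi x
  have hyne : ∀ j, j ≠ i → y j = x j := fun j h => Function.update_of_ne h yi x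
  -- row sum unaffected
  have h1 : ∀ k, (∑ j, P k j * y j) = (∑ j, P k j * x j) + P k i * (yi - x i) := by
    intro k
    have : ∀ j ∈ Finset.univ, P k j * y j =
        (P k j * x j) + (if j = i then P k i * (yi - x i) else 0) := by
      intro j _
      by_cases h : j = i
      · subst h; simp [hyi]; ring
      · simp [h, hyne j h]
    rw [Finset.sum_congr rfl this, Finset.sum_add_distrib, Finset.sum_ite_eq' Finset.univ i]
    simp
  have h1i : (∑ j, P i j * y j) = (∑ j, P i j * x j) := by
    rw [h1 i, hdiag i]; ring
  have h2 : (∑ j, P j i * y j) = (∑ j, P j i * x j) := by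
    apply Finset.sum_congr rfl
    intro j _
    by_cases h : j = i
    · rw [h, hdiag i]; ring
    · rw [hyne j h]
  -- column-sum identity used for cross terms
  have hcol : (∑ k ∈ Finset.univ.erase i, x k * (a * (P k i * (x i - yi)))) =
      a * (x i - yi) * (∑ j, P j i * x j) := by
    rw [Finset.mul_sum]
    rw [show (∑ j, a * (x i - yi) * (P j i * x j)) =
        ∑ j ∈ Finset.univ.erase i, a * (x i - yi) * (P j i * x j) from
      (Finset.sum_erase _ (by rw [hdiag i]; ring)).symm]
    apply Finset.sum_congr rfl
    intro k _
    ring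
  rw [hUtilde, hUtilde, hU, hU, hΦ x, hΦ y, ← Finset.sum_sub_distrib]
  rw [show (∑ k, ((-(1 / 2) * (x k) ^ 2 + x k * (a * ∑ j, P k j * x j + b k)) -
       (-(1 / 2) * (y k) ^ 2 + y k * (a * ∑ j, P k j * y j + b k)))) =
      ((-(1 / 2) * (x i) ^ 2 + x i * (a * ∑ j, P i j * x j + b i)) -
       (-(1 / 2) * (y i) ^ 2 + y i * (a * ∑ j, P i j * y j + b i))) +
      ∑ k ∈ Finset.univ.erase i,
       ((-(1 / 2) * (x k) ^ 2 + x k * (a * ∑ j, P k j * x j + b k)) -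
       (-(1 / 2) * (y k) ^ 2 + y k * (a * ∑ j, P k j * y j + b k))) from
    (Finset.add_sum_erase _ _ (Finset.mem_univ i)).symm]
  have hrest : (∑ k ∈ Finset.univ.erase i,
      ((-(1 / 2) * (x k) ^ 2 + x k * (a * ∑ j, P k j * x j + b k)) -
       (-(1 / 2) * (y k) ^ 2 + y k * (a * ∑ j, P k j * y j + b k)))) =
      ∑ k ∈ Finset.univ.erase i, x k * (a * (P k i * (x i - yi))) := by
    apply Finset.sum_congr rfl
    intro k hk
    have hki : k ≠ i := Finset.ne_of_mem_erase hk
    rw [hyne k hki, h1 k]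
    ring
  rw [hrest, hcol, hyi, h1i, h2]
  ring
end
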